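/- Let V, X be real Banach spaces, γ : V → X linear and bounded, J : X → ℝ locally Lipschitz such that ∂J maps bounded sets of X to bounded sets of X*, A : V → V*, and h : V → ℝ coercive in the sense that h(u)/‖u‖_V → +∞ as ‖u‖_V → ∞. Assume the map u ↦ A(u) + γ*∂J(γu) is h-relaxed monotone: ⟨A(u)+γ*ξ_u - A(v)-γ*ξ_v, u-v⟩ ≥ h(u-v) for all ξ_u ∈ ∂J(γu), ξ_v ∈ ∂J(γv). Then (⟨A(u),u⟩ - J⁰(γu; -γu))/‖u‖_V → +∞ as ‖u‖_V → ∞. -/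

import Mathlib

open Filter Topology

/-- Clarke generalized directional derivative of `J` at `u` in direction `v`. -/
noncomputable def clarkeDeriv {V : Type*} [NormedAddCommGroup V] [NormedSpace ℝ V]
    (J : V → ℝ) (u v : V) : ℝ :=
  Filter.limsup (fun p : V × ℝ => (J (p.1 + p.2 • v) - J p.1) / p.2)
    ((𝓝 u) ×ˢ (𝓝[>] (0 : ℝ)))

/-- Clarke generalized gradient of `J` at `u`. -/
def clarkeGrad {V : Type*} [NormedAddCommGroup V] [NormedSpace ℝ V]
    (J : V → ℝ) (u : V) : Set (V →L[ℝ] ℝ) :=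
  {ξ | ∀ w, ξ w ≤ clarkeDeriv J u w}

/-!
Take `v = 0` in the relaxed monotonicity inequality, with a fixed `ξ₀ ∈ ∂J(0)` and a
`ξ ∈ ∂J(γu)` attaining `⟨ξ, -γu⟩ = J⁰(γu; -γu)`. Such a `ξ` exists by Hahn–Banach: for locally
Lipschitz `J` the map `J⁰(x; ·)` is sublinear and bounded by `K‖·‖`, so a linear functional
dominated by it and attaining it at `-γu` is continuous. This gives
`⟨A u, u⟩ - J⁰(γu; -γu) ≥ h(u) - ‖A 0 + γ*ξ₀‖ ‖u‖`, and the coercivity of `h` finishes.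
-/

theorem Filter.isBoundedUnder_le_and_ge_of_eventually_abs_le {α : Type*} {F : Filter α}
    {g : α → ℝ} {C : ℝ} (hg : ∀ᶠ p in F, |g p| ≤ C) :
    IsBoundedUnder (· ≤ ·) F g ∧ IsBoundedUnder (· ≥ ·) F g :=
  isBoundedUnder_le_abs.1 (isBoundedUnder_of_eventually_le hg)

theorem Filter.limsup_comp_le_of_tendsto {α : Type*} {F : Filter α} [F.NeBot] {g : α → ℝ}
    {φ : α → α} (hφ : Tendsto φ F F) {C : ℝ} (hg : ∀ᶠ p in F, |g p| ≤ C) :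
    limsup (g ∘ φ) F ≤ limsup g F := by
  rw [limsup_comp]
  exact limsup_le_limsup_of_le hφ
    (isBoundedUnder_le_and_ge_of_eventually_abs_le (hφ.eventually hg)).2.isCoboundedUnder_le
    (isBoundedUnder_le_and_ge_of_eventually_abs_le hg).1

theorem map_const_mul_nhdsGT_zero {c : ℝ} (hc : 0 < c) :
    map (c * ·) (𝓝[>] (0 : ℝ)) = 𝓝[>] 0 := by
  change map (Homeomorph.mulLeft₀ c hc.ne') _ = _
  rw [(Homeomorph.mulLeft₀ c hc.ne').isEmbedding.map_nhdsWithin_eq]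
  simp [Set.image_mul_left_Ioi hc]

theorem exists_linearMap_le_sublinear_apply_eq {E : Type*} [AddCommGroup E] [Module ℝ E]
    (N : E → ℝ) (N_hom : ∀ c : ℝ, 0 < c → ∀ x, N (c • x) = c * N x)
    (N_add : ∀ x y, N (x + y) ≤ N x + N y) (x : E) :
    ∃ g : E →ₗ[ℝ] ℝ, g x = N x ∧ ∀ y, g y ≤ N y := by
  have N_zero : N 0 = 0 := by grind [N_hom 2 (by norm_num) 0, smul_zero]
  have N_neg : 0 ≤ N x + N (-x) := by simpa [N_zero] using N_add x (-x)
  let f : E →ₗ.[ℝ] ℝ := LinearPMap.mkSpanSingleton' x (N x) fun (c : ℝ) hc => by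
    rcases smul_eq_zero.1 hc with rfl | rfl <;> simp [N_zero]
  obtain ⟨g, hgf, hgN⟩ := exists_extension_of_le_sublinear f N N_hom N_add <| by
    rintro ⟨y, hy⟩
    obtain ⟨c, rfl⟩ := Submodule.mem_span_singleton.1 hy
    rw [LinearPMap.mkSpanSingleton'_apply, smul_eq_mul, RingHom.id_apply]
    change c * N x ≤ N (c • x)
    rcases lt_trichotomy c 0 with hc | rfl | hc
    · rw [← neg_smul_neg, N_hom (-c) (neg_pos.2 hc)]
      linarith [mul_nonneg (neg_nonneg.2 hc.le) N_neg]
    · simp [N_zero]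
    · rw [N_hom c hc]
  exact ⟨g, (hgf ⟨x, Submodule.mem_span_singleton_self x⟩).trans
    (LinearPMap.mkSpanSingleton'_apply_self _ _ _ _), hgN⟩

section Clarke

variable {X : Type*} [NormedAddCommGroup X] [NormedSpace ℝ X]

noncomputable def clarkeQuotient (J : X → ℝ) (w : X) (p : X × ℝ) : ℝ :=
  (J (p.1 + p.2 • w) - J p.1) / p.2

theorem clarkeDeriv_eq_limsup (J : X → ℝ) (u w : X) :
    clarkeDeriv J u w = limsup (clarkeQuotient J w) ((𝓝 u) ×ˢ 𝓝[>] 0) :=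
  rfl

theorem clarkeQuotient_add (J : X → ℝ) (w₁ w₂ : X) :
    clarkeQuotient J (w₁ + w₂) =
      clarkeQuotient J w₁ ∘ (fun p => (p.1 + p.2 • w₂, p.2)) + clarkeQuotient J w₂ := by
  funext p
  simp only [clarkeQuotient, Pi.add_apply, Function.comp_apply, smul_add, ← add_div]
  congr 1
  rw [add_comm (p.2 • w₁), ← add_assoc]
  ring

theorem clarkeQuotient_smul (J : X → ℝ) (w : X) (c : ℝ) (p : X × ℝ) :
    clarkeQuotient J (c • w) p = c * clarkeQuotient J w (p.1, c * p.2) := by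
  simp only [clarkeQuotient, smul_smul, mul_comm p.2 c]
  rcases eq_or_ne c 0 with rfl | hc
  · simp
  rcases eq_or_ne p.2 0 with hp | hp
  · simp [hp]
  field_simp

theorem tendsto_add_smul_nhds_prod_nhdsGT (u w : X) :
    Tendsto (fun p : X × ℝ => p.1 + p.2 • w) ((𝓝 u) ×ˢ 𝓝[>] 0) (𝓝 u) := by
  have hc : Tendsto (fun p : X × ℝ => p.1 + p.2 • w) (𝓝 (u, 0)) (𝓝 u) := by
    simpa using (show Continuous fun p : X × ℝ => p.1 + p.2 • w by fun_prop).tendsto (u, 0)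
  rw [nhds_prod_eq] at hc
  exact hc.mono_left (prod_mono le_rfl nhdsWithin_le_nhds)

theorem LocallyLipschitz.exists_eventually_abs_clarkeQuotient_le {J : X → ℝ}
    (hJ : LocallyLipschitz J) (u : X) :
    ∃ K : ℝ, ∀ w : X, ∀ᶠ p in (𝓝 u) ×ˢ 𝓝[>] 0, |clarkeQuotient J w p| ≤ K * ‖w‖ := by
  obtain ⟨K, t, ht, hlip⟩ := hJ u
  refine ⟨K, fun w => ?_⟩
  filter_upwards [tendsto_fst.eventually_mem ht,
    (tendsto_add_smul_nhds_prod_nhdsGT u w).eventually_mem ht,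
    tendsto_snd.eventually_mem self_mem_nhdsWithin] with p hp hpw (hpos : 0 < p.2)
  have hdist := hlip.dist_le_mul _ hpw _ hp
  rw [Real.dist_eq, dist_eq_norm, add_sub_cancel_left, norm_smul,
    Real.norm_of_nonneg hpos.le] at hdist
  rw [clarkeQuotient, abs_div, abs_of_pos hpos, div_le_iff₀ hpos]
  linarith

theorem LocallyLipschitz.exists_clarkeDeriv_le {J : X → ℝ} (hJ : LocallyLipschitz J) (u : X) :
    ∃ K : ℝ, ∀ w : X, clarkeDeriv J u w ≤ K * ‖w‖ := by
  obtain ⟨K, hK⟩ := hJ.exists_eventually_abs_clarkeQuotient_le u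
  refine ⟨K, fun w => limsup_le_of_le ?_ ((hK w).mono fun _ hp => (abs_le.1 hp).2)⟩
  exact (isBoundedUnder_le_and_ge_of_eventually_abs_le (hK w)).2.isCoboundedUnder_le

theorem clarkeDeriv_add_le {J : X → ℝ} (hJ : LocallyLipschitz J) (u w₁ w₂ : X) :
    clarkeDeriv J u (w₁ + w₂) ≤ clarkeDeriv J u w₁ + clarkeDeriv J u w₂ := by
  obtain ⟨K, hK⟩ := hJ.exists_eventually_abs_clarkeQuotient_le u
  have hshift : Tendsto (fun p : X × ℝ => (p.1 + p.2 • w₂, p.2))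
      ((𝓝 u) ×ˢ 𝓝[>] 0) ((𝓝 u) ×ˢ 𝓝[>] 0) :=
    (tendsto_add_smul_nhds_prod_nhdsGT u w₂).prodMk tendsto_snd
  have hb₁ := isBoundedUnder_le_and_ge_of_eventually_abs_le (hshift.eventually (hK w₁))
  have hb₂ := isBoundedUnder_le_and_ge_of_eventually_abs_le (hK w₂)
  simp only [clarkeDeriv_eq_limsup, clarkeQuotient_add]
  calc _ ≤ limsup (clarkeQuotient J w₁ ∘ fun p => (p.1 + p.2 • w₂, p.2)) ((𝓝 u) ×ˢ 𝓝[>] 0)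
        + limsup (clarkeQuotient J w₂) ((𝓝 u) ×ˢ 𝓝[>] 0) :=
        limsup_add_le hb₁.2 hb₁.1 hb₂.2.isCoboundedUnder_le hb₂.1
    _ ≤ _ := add_le_add_left (limsup_comp_le_of_tendsto hshift (hK w₁)) _

theorem clarkeDeriv_smul {J : X → ℝ} (hJ : LocallyLipschitz J) (u w : X) {c : ℝ} (hc : 0 < c) :
    clarkeDeriv J u (c • w) = c * clarkeDeriv J u w := by
  obtain ⟨K, hK⟩ := hJ.exists_eventually_abs_clarkeQuotient_le u
  have hb := isBoundedUnder_le_and_ge_of_eventually_abs_le (hK w)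
  have hscale : map (Prod.map id (c * ·)) ((𝓝 u) ×ˢ 𝓝[>] 0) = (𝓝 u) ×ˢ 𝓝[>] (0 : ℝ) := by
    rw [← prod_map_map_eq', map_id, map_const_mul_nhdsGT_zero hc]
  have hmul := Monotone.map_limsup_of_continuousAt (f := (c * ·))
    (fun _ _ hab => mul_le_mul_of_nonneg_left hab hc.le) (clarkeQuotient J w)
    (continuous_const_mul c).continuousAt hb.1 hb.2.isCoboundedUnder_le
  calc clarkeDeriv J u (c • w)
      = limsup (((c * ·) ∘ clarkeQuotient J w) ∘ Prod.map id (c * ·)) ((𝓝 u) ×ˢ 𝓝[>] 0) :=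
        congrArg (limsup · _) (funext (clarkeQuotient_smul J w c))
    _ = c * clarkeDeriv J u w := by rw [limsup_comp, hscale, ← hmul]; rfl

theorem exists_mem_clarkeGrad_apply_eq {J : X → ℝ} (hJ : LocallyLipschitz J) (u z : X) :
    ∃ ξ ∈ clarkeGrad J u, ξ z = clarkeDeriv J u z := by
  obtain ⟨g, hgz, hg⟩ := exists_linearMap_le_sublinear_apply_eq (clarkeDeriv J u)
    (fun _ hc w => clarkeDeriv_smul hJ u w hc) (clarkeDeriv_add_le hJ u) z
  obtain ⟨K, hK⟩ := hJ.exists_clarkeDeriv_le u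
  have hbound (w : X) : ‖g w‖ ≤ K * ‖w‖ := by
    have hneg := (hg (-w)).trans (hK (-w))
    rw [map_neg, norm_neg] at hneg
    exact abs_le.2 ⟨by linarith, (hg w).trans (hK w)⟩
  exact ⟨g.mkContinuous K hbound, hg, hgz⟩

end Clarke

theorem coercivity_from_relaxed_monotonicity_general
    {V X : Type*} [NormedAddCommGroup V] [NormedSpace ℝ V]
    [NormedAddCommGroup X] [NormedSpace ℝ X]
    (γ : V →L[ℝ] X) (J : X → ℝ) (hJ : LocallyLipschitz J)
    (A : V → (V →L[ℝ] ℝ)) (h : V → ℝ)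
    (hcoer : ∀ M : ℝ, ∃ R : ℝ, ∀ u : V, R ≤ ‖u‖ → M ≤ h u / ‖u‖)
    (hmono : ∀ u v : V, ∀ ξu ∈ clarkeGrad J (γ u), ∀ ξv ∈ clarkeGrad J (γ v),
      h (u - v) ≤ A u (u - v) + ξu (γ (u - v)) - A v (u - v) - ξv (γ (u - v))) :
    ∀ M : ℝ, ∃ R : ℝ, ∀ u : V, R ≤ ‖u‖ →
      M ≤ (A u u - clarkeDeriv J (γ u) (-(γ u))) / ‖u‖ := by
  intro M
  obtain ⟨ξ₀, hξ₀, -⟩ := exists_mem_clarkeGrad_apply_eq hJ (γ 0) 0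
  set L : V →L[ℝ] ℝ := A 0 + ξ₀.comp γ
  obtain ⟨R, hR⟩ := hcoer (M + ‖L‖)
  refine ⟨max R 1, fun u hu => ?_⟩
  have hu_pos : 0 < ‖u‖ := lt_of_lt_of_le one_pos (le_of_max_le_right hu)
  obtain ⟨ξ, hξ, hξu⟩ := exists_mem_clarkeGrad_apply_eq hJ (γ u) (-(γ u))
  have hmon := hmono u 0 ξ hξ ξ₀ hξ₀
  rw [sub_zero] at hmon
  have hL : -(‖L‖ * ‖u‖) ≤ A 0 u + ξ₀ (γ u) := neg_le_of_abs_le (L.le_opNorm u)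
  have hh : (M + ‖L‖) * ‖u‖ ≤ h u := (le_div_iff₀ hu_pos).1 (hR u (le_of_max_le_left hu))
  rw [le_div_iff₀ hu_pos, ← hξu, map_neg]
  linarith

/-- Lemma 3.1: relaxed monotonicity of `u ↦ A u + γ* ∂J(γ u)` with a coercive `h` yields the
coercivity condition `(⟨A u, u⟩ - J⁰(γu; -γu))/‖u‖ → +∞`. -/
theorem coercivity_from_relaxed_monotonicity
    {V X : Type*} [NormedAddCommGroup V] [NormedSpace ℝ V] [CompleteSpace V]
    [NormedAddCommGroup X] [NormedSpace ℝ X] [CompleteSpace X]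
    (γ : V →L[ℝ] X) (J : X → ℝ) (hJ : LocallyLipschitz J)
    (hJbdd : ∀ s : Set X, Bornology.IsBounded s →
      ∃ M : ℝ, ∀ x ∈ s, ∀ ξ ∈ clarkeGrad J x, ‖ξ‖ ≤ M)
    (A : V → (V →L[ℝ] ℝ)) (h : V → ℝ)
    (hcoer : ∀ M : ℝ, ∃ R : ℝ, ∀ u : V, R ≤ ‖u‖ → M ≤ h u / ‖u‖)
    (hmono : ∀ u v : V, ∀ ξu ∈ clarkeGrad J (γ u), ∀ ξv ∈ clarkeGrad J (γ v),
      h (u - v) ≤ A u (u - v) + ξu (γ (u - v)) - A v (u - v) - ξv (γ (u - v))) :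
    ∀ M : ℝ, ∃ R : ℝ, ∀ u : V, R ≤ ‖u‖ →
      M ≤ (A u u - clarkeDeriv J (γ u) (-(γ u))) / ‖u‖ :=
  coercivity_from_relaxed_monotonicity_general γ J hJ A h hcoer hmono
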